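/- Let G be a paw-free graph, C a clique in G with |C| ≥ 2, and v a vertex not in C having at least one neighbor in C. Then |N_C(v)| ≥ |C| − 1, i.e., v is adjacent to all but at most one vertex of C. -/

import Mathlib

/-- The paw: a triangle `0,1,2` with a pendant vertex `3` adjacent to `0`. -/
def Paw : SimpleGraph (Fin 4) :=
  SimpleGraph.fromRel (fun a b =>
    (a, b) ∈ [((0 : Fin 4), (1 : Fin 4)), (0, 2), (1, 2), (0, 3)])

instance : DecidableRel Paw.Adj := fun a b =>
  decidable_of_iff _ (SimpleGraph.fromRel_adj _ a b).symm

/-- In a paw-free graph, a vertex outside a clique `C` of size at least `2`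
having a neighbor in `C` is adjacent to all but at most one vertex of `C`. -/
theorem paw_free_almost_complete {V : Type*} [Fintype V] [DecidableEq V]
    (G : SimpleGraph V) [DecidableRel G.Adj]
    (hpf : IsEmpty (Paw ↪g G))
    (C : Finset V) (hC : ∀ a ∈ C, ∀ b ∈ C, a ≠ b → G.Adj a b)
    (hC2 : 2 ≤ C.card)
    (v : V) (hv : v ∉ C) (hnbr : ∃ c ∈ C, G.Adj v c) :
    C.card - 1 ≤ (C.filter (G.Adj v)).card := by
  by_contra h
  push_neg at h
  -- the set of non-neighbors of v in C has at least 2 elements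
  have hsplit : (C.filter (G.Adj v)).card + (C.filter (fun x => ¬ G.Adj v x)).card = C.card :=
    Finset.card_filter_add_card_filter_not _
  have h2 : 2 ≤ (C.filter (fun x => ¬ G.Adj v x)).card := by omega
  obtain ⟨a, ha, b, hb, hab⟩ := Finset.one_lt_card.mp h2
  simp only [Finset.mem_filter] at ha hb
  obtain ⟨c, hcC, hvc⟩ := hnbr
  have hca : c ≠ a := by rintro rfl; exact ha.2 hvc
  have hcb : c ≠ b := by rintro rfl; exact hb.2 hvc
  have hva : v ≠ a := by rintro rfl; exact hv ha.1
  have hvb : v ≠ b := by rintro rfl; exact hv hb.1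
  have hvcne : v ≠ c := fun e => hv (e ▸ hcC)
  have hAca : G.Adj c a := hC c hcC a ha.1 hca
  have hAcb : G.Adj c b := hC c hcC b hb.1 hcb
  have hAab : G.Adj a b := hC a ha.1 b hb.1 hab
  have hnav : ¬ G.Adj a v := fun h' => ha.2 h'.symm
  have hnbv : ¬ G.Adj b v := fun h' => hb.2 h'.symm
  refine hpf.false ⟨⟨![c, a, b, v], ?_⟩, ?_⟩
  · intro i j
    fin_cases i <;> fin_cases j <;>
      first
        | (intro _; rfl)
        | exact fun e => absurd e hca
        | exact fun e => absurd e hca.symm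
        | exact fun e => absurd e hcb
        | exact fun e => absurd e hcb.symm
        | exact fun e => absurd e hab
        | exact fun e => absurd e hab.symm
        | exact fun e => absurd e hva
        | exact fun e => absurd e hva.symm
        | exact fun e => absurd e hvb
        | exact fun e => absurd e hvb.symm
        | exact fun e => absurd e hvcne
        | exact fun e => absurd e hvcne.symm
  · intro i j
    constructor
    · intro h'
      fin_cases i <;> fin_cases j <;> beta_reduce <;>
        first
          | decide
          | exact absurd h' G.irrefl
          | exact absurd h' hnav
          | exact absurd h' hnbv
          | exact absurd h' ha.2
          | exact absurd h' hb.2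
    · intro h'
      fin_cases i <;> fin_cases j <;> beta_reduce <;>
        first
          | exact hAca | exact hAca.symm | exact hAcb | exact hAcb.symm
          | exact hAab | exact hAab.symm | exact hvc | exact hvc.symm
          | exact absurd h' (by decide)
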